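/- Let q ∈ ℂ, q ≠ 0, let α, β, f ∈ ℂ((x)) with α, β nonzero, and suppose α·σ_q(f) + f = β. Define β₀ = 0, β_k = ∑_{j=0}^{k-1}(−α σ_q)ʲ β, and assume β_j ≠ 0 for 0 < j ≤ n. Then the operator L = (1/β_n)(α σ_q + 1)(1/β_{n−1})(α² σ_q − 1) ⋯ (1/β₁)(αⁿ σ_q − (−1)ⁿ) satisfies L(fⁿ) = (−1)^{n(n−1)/2}. -/

import Mathlib

noncomputable section

/-- The `q`-dilation operator `σ_q` on formal Laurent series: `(σ_q f)(x) = f(qx)`,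
i.e. the coefficient of `xⁿ` is multiplied by `qⁿ`. -/
def sigmaq (q : ℂ) (f : LaurentSeries ℂ) : LaurentSeries ℂ :=
  ⟨fun n => q ^ n * f.coeff n,
    f.isPWO_support'.mono (by
      intro n hn
      simp only [Function.mem_support] at hn ⊢
      exact fun h => hn (by rw [h, mul_zero]))⟩

/-- `β_n = ∑_{k=0}^{n-1} (−α σ_q)ᵏ β` (so `β₀ = 0`). -/
def betaN (q : ℂ) (α β : LaurentSeries ℂ) (n : ℕ) : LaurentSeries ℂ :=
  ∑ k ∈ Finset.range n, (fun g => -α * sigmaq q g)^[k] β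

/-- The operators `L_{n,k}` attached to `(α, β)`: `L_{n,0} = id`,
`L_{n,k+1} = (1/β_{k+1})(α^{n−k} σ_q − (−1)^{n−k}) ∘ L_{n,k}`, so that
`L_{n,n} = (1/β_n)(α σ_q + 1)(1/β_{n−1})(α² σ_q − 1) ⋯ (1/β₁)(αⁿ σ_q − (−1)ⁿ)`. -/
def Lab (q : ℂ) (α β : LaurentSeries ℂ) (n : ℕ) : ℕ → LaurentSeries ℂ → LaurentSeries ℂ
  | 0 => id
  | k + 1 => fun g =>
      (betaN q α β (k + 1))⁻¹ *
        (α ^ (n - k) * sigmaq q (Lab q α β n k g)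
          - (-1 : LaurentSeries ℂ) ^ (n - k) * Lab q α β n k g)

open Polynomial Finset

namespace LabAux

abbrev K := LaurentSeries ℂ

lemma sigmaq_coeff (q : ℂ) (f : K) (n : ℤ) : (sigmaq q f).coeff n = q ^ n * f.coeff n := rfl

lemma sigmaq_support (q : ℂ) (f : K) : (sigmaq q f).support ⊆ f.support := by
  intro n hn
  simp only [HahnSeries.mem_support, sigmaq_coeff] at hn ⊢
  exact fun h => hn (by rw [h, mul_zero])

/-- `σ_q` as a ring homomorphism (for `q ≠ 0`). -/
def sigRH (q : ℂ) (hq : q ≠ 0) : K →+* K where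
  toFun := sigmaq q
  map_one' := by
    ext n
    rw [sigmaq_coeff, HahnSeries.coeff_one]
    rcases eq_or_ne n 0 with h | h <;> simp [h, HahnSeries.coeff_one]
  map_mul' x y := by
    ext n
    rw [sigmaq_coeff, HahnSeries.coeff_mul, HahnSeries.coeff_mul, Finset.mul_sum]
    have hsub : Finset.antidiagonal (sigmaq q x).isPWO_support (sigmaq q y).isPWO_support n
        ⊆ Finset.antidiagonal x.isPWO_support y.isPWO_support n := by
      intro ij hij
      rw [Finset.mem_addAntidiagonal] at hij ⊢
      exact ⟨sigmaq_support q x hij.1, sigmaq_support q y hij.2.1, hij.2.2⟩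
    rw [Finset.sum_subset hsub ?_]
    · refine Finset.sum_congr rfl fun ij hij => ?_
      obtain ⟨_, _, hsum⟩ := Finset.mem_addAntidiagonal.mp hij
      rw [sigmaq_coeff, sigmaq_coeff, ← hsum, zpow_add₀ hq]
      ring
    · intro ij hij hij'
      rw [Finset.mem_addAntidiagonal] at hij hij'
      by_cases hx : (sigmaq q x).coeff ij.1 = 0
      · exact mul_eq_zero_of_left hx _
      · by_cases hy : (sigmaq q y).coeff ij.2 = 0
        · exact mul_eq_zero_of_right _ hy
        · exact absurd ⟨hx, hy, hij.2.2⟩ hij'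
  map_zero' := by ext n; simp [sigmaq_coeff]
  map_add' x y := by ext n; simp [sigmaq_coeff, HahnSeries.coeff_add, mul_add]

lemma sigRH_apply (q : ℂ) (hq : q ≠ 0) (f : K) : sigRH q hq f = sigmaq q f := rfl

lemma betaN_one (q : ℂ) (α β : K) : betaN q α β 1 = β := by
  simp [betaN]

lemma betaN_succ (q : ℂ) (hq : q ≠ 0) (α β : K) (k : ℕ) :
    betaN q α β (k + 1) = β - α * sigmaq q (betaN q α β k) := by
  unfold betaN
  rw [Finset.sum_range_succ']
  have h1 : ∀ i, (fun g : K => -α * sigmaq q g)^[i + 1] β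
      = -α * sigmaq q ((fun g : K => -α * sigmaq q g)^[i] β) := fun i =>
    Function.iterate_succ_apply' _ _ _
  simp only [h1, Function.iterate_zero_apply]
  rw [← Finset.mul_sum]
  have h2 : ∑ i ∈ Finset.range k, sigmaq q ((fun g : K => -α * sigmaq q g)^[i] β)
      = sigmaq q (∑ i ∈ Finset.range k, (fun g : K => -α * sigmaq q g)^[i] β) :=
    (map_sum (sigRH q hq) _ _).symm
  rw [h2]
  ring

lemma monic_prodlin (g : ℕ → K) (m : ℕ) :
    (∏ i ∈ Finset.range m, (X + C (g i))).Monic :=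
  monic_prod_of_monic _ _ fun i _ => monic_X_add_C _

lemma natDegree_prodlin (g : ℕ → K) (m : ℕ) :
    (∏ i ∈ Finset.range m, (X + C (g i))).natDegree = m := by
  rw [natDegree_prod]
  · simp [natDegree_X_add_C]
  · exact fun i _ => (monic_X_add_C _).ne_zero

lemma degree_prodlin (g : ℕ → K) (m : ℕ) :
    (∏ i ∈ Finset.range m, (X + C (g i))).degree = (m : WithBot ℕ) := by
  rw [degree_eq_natDegree (monic_prodlin g m).ne_zero, natDegree_prodlin]

lemma moddec (p : Polynomial K) (c : K) :
    C (p.eval (-c)) + (X + C c) * (p /ₘ (X + C c)) = p := by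
  have e : (X + C c : Polynomial K) = X - C (-c) := by rw [map_neg, sub_neg_eq_add]
  rw [e, ← modByMonic_X_sub_C_eq_C_eval]
  exact modByMonic_add_div p (X - C (-c))

set_option maxHeartbeats 1000000 in
/-- Main invariant: `L_{n,k}(fⁿ) = ±` the constant coefficient of the quotient of
`(X+f)ⁿ` by `∏_{i<k} (X + β_{i+1})`. -/
lemma key (q : ℂ) (hq : q ≠ 0) (α β f : K)
    (hα : α ≠ 0) (hf : α * sigmaq q f + f = β) (n : ℕ)
    (hne : ∀ j, 0 < j → j ≤ n → betaN q α β j ≠ 0) :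
    ∀ k, k ≤ n → Lab q α β n k (f ^ n) =
      (-1 : K) ^ (∑ i ∈ Finset.range k, (n - 1 - i)) *
      (((X + C f) ^ n /ₘ ∏ i ∈ Finset.range k,
        (X + C (betaN q α β (i + 1)))).eval 0) := by
  intro k
  induction k with
  | zero => intro _; simp [Lab, divByMonic_one]
  | succ k ih =>
    intro hk1
    have hk : k ≤ n := Nat.le_of_succ_le hk1
    set b : ℕ → K := betaN q α β with hb
    set σ' : K →+* K := sigRH q hq with hσ'
    set u : K := -α with hu
    have hu0 : u ≠ 0 := neg_ne_zero.mpr hα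
    set ℓ : K[X] := C u⁻¹ * (X + C β) with hℓ
    set φ : K[X] →+* K[X] := eval₂RingHom (C.comp σ') ℓ with hφ
    set FF : K[X] := (X + C f) ^ n with hFF
    set P : K[X] := ∏ i ∈ Finset.range k, (X + C (b (i + 1))) with hP
    set P' : K[X] := ∏ i ∈ Finset.range k, (X + C (b (i + 2))) with hP'
    set Pp : K[X] := ∏ i ∈ Finset.range (k + 1), (X + C (b (i + 1))) with hPp
    set D : K[X] := X + C (b (k + 1)) with hD
    set D' : K[X] := X + C (b 1) with hD'
    have hmonP : P.Monic := monic_prodlin _ _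
    have hmonP' : P'.Monic := monic_prodlin _ _
    have hmonPp : Pp.Monic := monic_prodlin _ _
    have hdegP : P.degree = (k : WithBot ℕ) := degree_prodlin _ _
    have hdegP' : P'.degree = (k : WithBot ℕ) := degree_prodlin _ _
    have hdegPp : Pp.degree = ((k + 1 : ℕ) : WithBot ℕ) := degree_prodlin _ _
    have hPpD : Pp = P * D := Finset.prod_range_succ _ _
    have hPpD' : Pp = P' * D' := by
      rw [hPp, Finset.prod_range_succ']
    set Q : K[X] := FF /ₘ P with hQ
    set R : K[X] := FF %ₘ P with hR
    have hdiv : R + P * Q = FF := modByMonic_add_div FF P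
    have hdegR : R.degree < (k : WithBot ℕ) := hdegP ▸ degree_modByMonic_lt FF hmonP
    -- the twisted substitution φ
    have hφlin : ∀ c d : K, β - α * sigmaq q c = d →
        φ (X + C c) = C u⁻¹ * (X + C d) := by
      intro c d hd
      have h0 : φ (X + C c) = ℓ + C (σ' c) := by
        simp [hφ, coe_eval₂RingHom, eval₂_add, eval₂_X, eval₂_C]
      have hac : α * σ' c = β - d := by rw [sigRH_apply]; linear_combination -hd
      have hui : u⁻¹ = -α⁻¹ := inv_eq_of_mul_eq_one_right (by rw [hu]; linear_combination mul_inv_cancel₀ hα)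
      have hsc : u⁻¹ * β + σ' c = u⁻¹ * d := by
        have h2 : α⁻¹ * (α * σ' c) = α⁻¹ * (β - d) := by rw [hac]
        rw [← mul_assoc, inv_mul_cancel₀ hα, one_mul] at h2
        rw [hui]
        linear_combination h2
      calc φ (X + C c) = C u⁻¹ * X + C (u⁻¹ * β + σ' c) := by
            rw [h0, hℓ, C_add, C_mul]; ring
        _ = C u⁻¹ * (X + C d) := by rw [hsc, C_mul]; ring
    have hφf : φ (X + C f) = C u⁻¹ * (X + C f) := by
      apply hφlin
      rw [← hf]; ring
    have hφb : ∀ i : ℕ, φ (X + C (b (i + 1))) = C u⁻¹ * (X + C (b (i + 2))) := by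
      intro i
      exact hφlin _ _ (betaN_succ q hq α β (i + 1)).symm
    have hφF : φ FF = C (u⁻¹ ^ n) * FF := by
      rw [hFF, map_pow, hφf, C_pow, mul_pow (C u⁻¹) (X + C f) n]
    have hφP : φ P = C (u⁻¹ ^ k) * P' := by
      rw [hP, map_prod]
      simp only [hφb]
      rw [Finset.prod_mul_distrib, Finset.prod_const, Finset.card_range, C_pow, hP']
    -- transported division
    have hA : φ R + C (u⁻¹ ^ k) * P' * φ Q = C (u⁻¹ ^ n) * FF := by
      rw [← hφP, ← hφF, ← map_mul, ← map_add, hdiv]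
    have hc1 : (C (u ^ n) : K[X]) * C (u⁻¹ ^ n) = 1 := by
      rw [← C_mul, ← mul_pow, mul_inv_cancel₀ hu0, one_pow, C_1]
    have hc2 : (C (u ^ n) : K[X]) * C (u⁻¹ ^ k) = C (u ^ (n - k)) := by
      rw [← C_mul, C_inj, inv_pow]
      rw [show n = (n - k) + k by omega, pow_add, mul_assoc,
        mul_inv_cancel₀ (pow_ne_zero _ hu0), mul_one]
      congr 1
      omega
    have h2 : C (u ^ n) * φ R + P' * (C (u ^ (n - k)) * φ Q) = FF := by
      calc C (u ^ n) * φ R + P' * (C (u ^ (n - k)) * φ Q)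
          = C (u ^ n) * (φ R + C (u⁻¹ ^ k) * P' * φ Q) := by rw [← hc2]; ring
        _ = C (u ^ n) * (C (u⁻¹ ^ n) * FF) := by rw [hA]
        _ = FF := by rw [← mul_assoc, hc1, one_mul]
    -- degree bound for the transported remainder
    have hdegφR : (C (u ^ n) * φ R).degree < P'.degree := by
      rw [degree_C_mul (pow_ne_zero _ hu0), hdegP']
      rcases eq_or_ne R 0 with h0 | h0
      · rw [h0, map_zero, degree_zero]
        exact WithBot.bot_lt_coe _
      · have hmap : φ R = (R.map σ').comp ℓ := by
          rw [hφ, coe_eval₂RingHom, Polynomial.comp, eval₂_map]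
        have hinj : Function.Injective σ' := σ'.injective
        have hdegℓ : ℓ.natDegree = 1 := by
          rw [hℓ, natDegree_C_mul (inv_ne_zero hu0), natDegree_X_add_C]
        have hle : (φ R).natDegree ≤ R.natDegree := by
          rw [hmap]
          calc ((R.map σ').comp ℓ).natDegree
              ≤ (R.map σ').natDegree * ℓ.natDegree := natDegree_comp_le
            _ = R.natDegree := by rw [natDegree_map_eq_of_injective hinj, hdegℓ, mul_one]
        calc (φ R).degree ≤ ((φ R).natDegree : WithBot ℕ) := degree_le_natDegree
          _ ≤ (R.natDegree : WithBot ℕ) := by exact_mod_cast hle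
          _ = R.degree := (degree_eq_natDegree h0).symm
          _ < (k : WithBot ℕ) := hdegR
    have huniq := div_modByMonic_unique (f := FF) (C (u ^ (n - k)) * φ Q)
      (C (u ^ n) * φ R) hmonP' ⟨h2, hdegφR⟩
    set QB : K[X] := FF /ₘ P' with hQB
    set RB : K[X] := FF %ₘ P' with hRB
    have hQBeq : QB = C (u ^ (n - k)) * φ Q := huniq.1
    have hRBeq : RB = C (u ^ n) * φ R := huniq.2
    have hdivB : RB + P' * QB = FF := modByMonic_add_div FF P'
    have hdegRB : RB.degree < (k : WithBot ℕ) := hdegP' ▸ degree_modByMonic_lt FF hmonP'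
    -- dividing further by one linear factor on each side
    set cA : K := Q.eval (-(b (k + 1))) with hcA
    set cB : K := QB.eval (-(b 1)) with hcB
    have hQdec : C cA + D * (Q /ₘ D) = Q := moddec Q (b (k + 1))
    have hQBdec : C cB + D' * (QB /ₘ D') = QB := moddec QB (b 1)
    have hkk1 : (k : WithBot ℕ) < ((k + 1 : ℕ) : WithBot ℕ) := by
      exact_mod_cast Nat.lt_succ_self k
    have hdegPA : (P * C cA + R).degree < Pp.degree := by
      rw [hdegPp]
      refine lt_of_le_of_lt (degree_add_le _ _) (max_lt ?_ (lt_trans hdegR hkk1))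
      refine lt_of_le_of_lt (degree_mul_le _ _) ?_
      refine lt_of_le_of_lt (add_le_add_right degree_C_le _) ?_
      rw [add_zero, hdegP]
      exact hkk1
    have hdegPB : (P' * C cB + RB).degree < Pp.degree := by
      rw [hdegPp]
      refine lt_of_le_of_lt (degree_add_le _ _) (max_lt ?_ (lt_trans hdegRB hkk1))
      refine lt_of_le_of_lt (degree_mul_le _ _) ?_
      refine lt_of_le_of_lt (add_le_add_right degree_C_le _) ?_
      rw [add_zero, hdegP']
      exact hkk1
    have huniqA := div_modByMonic_unique (f := FF) (Q /ₘ D) (P * C cA + R) hmonPp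
      ⟨by rw [hPpD]; linear_combination hdiv + P * hQdec, hdegPA⟩
    have huniqB := div_modByMonic_unique (f := FF) (QB /ₘ D') (P' * C cB + RB) hmonPp
      ⟨by rw [hPpD']; linear_combination hdivB + P' * hQBdec, hdegPB⟩
    -- `cA = cB`, by comparing coefficients in degree `k`
    have hcAB : cA = cB := by
      have h3 : P * C cA + R = P' * C cB + RB := huniqA.2.symm.trans huniqB.2
      have h4 := congrArg (fun p : K[X] => p.coeff k) h3
      simp only [coeff_add, coeff_mul_C] at h4
      rw [coeff_eq_zero_of_degree_lt hdegR, coeff_eq_zero_of_degree_lt hdegRB] at h4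
      have hPk : P.coeff k = 1 := by
        have h := hmonP.coeff_natDegree
        rwa [hP, natDegree_prodlin] at h
      have hP'k : P'.coeff k = 1 := by
        have h := hmonP'.coeff_natDegree
        rwa [hP', natDegree_prodlin] at h
      rw [hPk, hP'k, one_mul, one_mul, add_zero, add_zero] at h4
      exact h4
    -- evaluations
    have hQ0 : Q.eval 0 = b (k + 1) * (Q /ₘ D).eval 0 + cA := by
      have h := congrArg (fun p : K[X] => p.eval 0) hQdec
      simp only [eval_add, eval_mul, eval_C, hD, eval_X, zero_add] at h
      linear_combination -h
    have hcBval : cB = u ^ (n - k) * σ' (Q.eval 0) := by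
      rw [hcB, hQBeq, eval_mul, eval_C]
      congr 1
      have hmap : φ Q = (Q.map σ').comp ℓ := by
        rw [hφ, coe_eval₂RingHom, Polynomial.comp, eval₂_map]
      rw [hmap, eval_comp]
      have hℓ0 : ℓ.eval (-(b 1)) = 0 := by
        rw [hℓ]
        simp [hb, betaN_one]
      rw [hℓ0, eval_map, show (0 : K) = σ' 0 from (map_zero σ').symm, eval₂_at_apply, map_zero]
    have hsq : (-1 : K) ^ (n - k) * (-1 : K) ^ (n - k) = 1 := by
      rw [← mul_pow]; norm_num
    have hupow : u ^ (n - k) = (-1 : K) ^ (n - k) * α ^ (n - k) := by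
      rw [hu]; ring
    have hmain : α ^ (n - k) * σ' (Q.eval 0) = (-1 : K) ^ (n - k) * cA := by
      rw [hcAB, hcBval, hupow]
      linear_combination (-(α ^ (n - k) * σ' (Q.eval 0))) * hsq
    have hsign : -((-1 : K) ^ (n - k)) = (-1 : K) ^ (n - 1 - k) := by
      rw [show n - k = (n - 1 - k) + 1 by omega, pow_succ]
      ring
    have hbinv : (b (k + 1))⁻¹ * b (k + 1) = 1 :=
      inv_mul_cancel₀ (hne (k + 1) (Nat.succ_pos k) hk1)
    -- assemble
    have hLab : Lab q α β n (k + 1) (f ^ n) = (b (k + 1))⁻¹ *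
        (α ^ (n - k) * sigmaq q (Lab q α β n k (f ^ n))
          - (-1 : K) ^ (n - k) * Lab q α β n k (f ^ n)) := rfl
    rw [hLab, ih hk]
    have hσe : sigmaq q ((-1 : K) ^ (∑ i ∈ Finset.range k, (n - 1 - i)) * Q.eval 0)
        = (-1 : K) ^ (∑ i ∈ Finset.range k, (n - 1 - i)) * σ' (Q.eval 0) := by
      rw [← sigRH_apply q hq, map_mul, map_pow, map_neg, map_one]
    rw [hσe, show FF /ₘ Pp = Q /ₘ D from huniqA.1, Finset.sum_range_succ, pow_add]
    set e : K := (-1 : K) ^ (∑ i ∈ Finset.range k, (n - 1 - i)) with he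
    set Q20 : K := (Q /ₘ D).eval 0 with hQ20
    calc (b (k + 1))⁻¹ * (α ^ (n - k) * (e * σ' (Q.eval 0))
            - (-1 : K) ^ (n - k) * (e * Q.eval 0))
        = (b (k + 1))⁻¹ * e * (α ^ (n - k) * σ' (Q.eval 0)
            - (-1 : K) ^ (n - k) * Q.eval 0) := by ring
      _ = (b (k + 1))⁻¹ * e * ((-1 : K) ^ (n - k) * cA
            - (-1 : K) ^ (n - k) * (b (k + 1) * Q20 + cA)) := by rw [hmain, hQ0]
      _ = ((b (k + 1))⁻¹ * b (k + 1)) * (e * (-((-1 : K) ^ (n - k)) * Q20)) := by ring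
      _ = e * (-1 : K) ^ (n - 1 - k) * Q20 := by rw [hbinv, hsign]; ring

end LabAux

open LabAux in
/-- Theorem 4.3: if `α σ_q(f) + f = β` and `β_j ≠ 0` for `0 < j ≤ n`, then
`L_{n,n}(fⁿ) = (−1)^{n(n−1)/2}`. -/
theorem Lab_apply_pow (q : ℂ) (hq : q ≠ 0) (α β f : LaurentSeries ℂ)
    (hα : α ≠ 0) (hβ : β ≠ 0) (hf : α * sigmaq q f + f = β) (n : ℕ) (hn : 1 ≤ n)
    (hne : ∀ j, 0 < j → j ≤ n → betaN q α β j ≠ 0) :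
    Lab q α β n n (f ^ n) = (-1 : LaurentSeries ℂ) ^ (n * (n - 1) / 2) := by
  have h := LabAux.key q hq α β f hα hf n hne n le_rfl
  rw [h]
  set P : Polynomial (LaurentSeries ℂ) :=
    ∏ i ∈ Finset.range n, (X + C (betaN q α β (i + 1))) with hP
  have hmonP : P.Monic := monic_prodlin _ _
  have hmonF : ((X + C f) ^ n : Polynomial (LaurentSeries ℂ)).Monic :=
    (monic_X_add_C f).pow n
  have hdegF : ((X + C f) ^ n : Polynomial (LaurentSeries ℂ)).degree = (n : WithBot ℕ) := by
    rw [degree_pow, degree_X_add_C]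
    simp
  have hdegP : P.degree = (n : WithBot ℕ) := degree_prodlin _ _
  have hdiv1 : ((X + C f) ^ n : Polynomial (LaurentSeries ℂ)) /ₘ P = 1 := by
    have huniq := div_modByMonic_unique (f := (X + C f) ^ n) 1 ((X + C f) ^ n - P) hmonP
      ⟨by ring, by
        rw [hdegP, ← hdegF]
        exact degree_sub_lt (hdegF.trans hdegP.symm) hmonF.ne_zero
          (by rw [hmonF.leadingCoeff, hmonP.leadingCoeff])⟩
    exact huniq.1
  rw [hdiv1, eval_one, mul_one]
  congr 1
  calc ∑ i ∈ Finset.range n, (n - 1 - i)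
      = ∑ i ∈ Finset.range n, i := Finset.sum_range_reflect (fun i => i) n
    _ = n * (n - 1) / 2 := Finset.sum_range_id n

end
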